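/- Probability of escaping the expert dataset: let D_1 consist of M i.i.d. expert trajectories and let E^{≤t} = {∃ τ ≤ t : s_τ ∉ S_τ(D_1)} be the event that a fresh expert rollout visits, at some time τ ≤ t, a state not seen at time τ in D_1. Then for every t ≤ H, E_{D_1}[Pr_{π*}[E^{≤t}]] ≤ (4/9)·|S|·H/M. -/

import Mathlib

open Finset
open scoped Classical

/-- Probability of a length-`H` trajectory `tr` (a function `Fin H → S × A`) under
initial distribution `ρ`, transitions `P`, and (possibly stochastic, nonstationary)
policy `π`. -/
noncomputable def trajProb {S A : Type*} {H : ℕ}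
    (ρ : S → ℝ) (P : Fin H → S → A → S → ℝ) (π : Fin H → S → A → ℝ)
    (tr : Fin H → S × A) : ℝ :=
  (if h : 0 < H then ρ (tr ⟨0, h⟩).1 else 1) *
    ∏ t : Fin H, (π t (tr t).1 (tr t).2 *
      if h : (t : ℕ) + 1 < H then P t (tr t).1 (tr t).2 (tr ⟨(t : ℕ) + 1, h⟩).1 else 1)

/-- Value `J(π) = E_π [∑_t r_t(s_t, a_t)]` of a policy. -/
noncomputable def value {S A : Type*} [Fintype S] [Fintype A] {H : ℕ}
    (ρ : S → ℝ) (P : Fin H → S → A → S → ℝ) (r : Fin H → S → A → ℝ)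
    (π : Fin H → S → A → ℝ) : ℝ :=
  ∑ tr : Fin H → S × A, trajProb ρ P π tr * ∑ t : Fin H, r t (tr t).1 (tr t).2

/-- Marginal probability of being at state `s` at time `t` when rolling out `π`. -/
noncomputable def stateProb {S A : Type*} [Fintype S] [Fintype A] {H : ℕ}
    (ρ : S → ℝ) (P : Fin H → S → A → S → ℝ) (π : Fin H → S → A → ℝ)
    (t : Fin H) (s : S) : ℝ :=
  ∑ tr : Fin H → S × A, if (tr t).1 = s then trajProb ρ P π tr else 0

/-- Total variation distance between two distributions on a finite action set. -/
noncomputable def tvDist {A : Type*} [Fintype A] (p q : A → ℝ) : ℝ :=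
  (∑ a : A, |p a - q a|) / 2

/-- The deterministic policy induced by an action map. -/
noncomputable def detPol {S A : Type*} {H : ℕ} (πs : Fin H → S → A) :
    Fin H → S → A → ℝ :=
  fun t s a => if a = πs t s then 1 else 0

/-- Probability of a dataset of `N` i.i.d. trajectories. -/
noncomputable def dataProb {S A : Type*} {H N : ℕ}
    (ρ : S → ℝ) (P : Fin H → S → A → S → ℝ) (π : Fin H → S → A → ℝ)
    (D : Fin N → Fin H → S × A) : ℝ :=
  ∏ i, trajProb ρ P π (D i)

lemma trajProb_nonneg {S A : Type*} {H : ℕ}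
    (ρ : S → ℝ) (hρ0 : ∀ s, 0 ≤ ρ s)
    (P : Fin H → S → A → S → ℝ) (hP0 : ∀ t s a s', 0 ≤ P t s a s')
    (π : Fin H → S → A → ℝ) (hπ0 : ∀ t s a, 0 ≤ π t s a)
    (tr : Fin H → S × A) : 0 ≤ trajProb ρ P π tr := by
  apply mul_nonneg
  · split <;> [apply hρ0; norm_num]
  · apply Finset.prod_nonneg
    intro t _
    apply mul_nonneg (hπ0 _ _ _)
    split <;> [apply hP0; norm_num]

lemma trajProb_cons {S A : Type*} {H : ℕ}
    (ρ : S → ℝ) (P : Fin (H+1) → S → A → S → ℝ) (π : Fin (H+1) → S → A → ℝ)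
    (x : S × A) (f : Fin H → S × A) :
    trajProb ρ P π (Fin.cons x f) =
      ρ x.1 * π 0 x.1 x.2 *
        trajProb (P 0 x.1 x.2) (fun t => P t.succ) (fun t => π t.succ) f := by
  unfold trajProb
  rw [Fin.prod_univ_succ]
  have h0 : (Fin.cons x f : Fin (H+1) → S × A) ⟨0, Nat.succ_pos H⟩ = x := rfl
  have hc : ∀ (k : ℕ) (h : k + 1 < H + 1),
      (Fin.cons x f : Fin (H+1) → S × A) ⟨k+1, h⟩ = f ⟨k, Nat.succ_lt_succ_iff.mp h⟩ := by
    intro k h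
    have : (⟨k+1, h⟩ : Fin (H+1)) = Fin.succ ⟨k, Nat.succ_lt_succ_iff.mp h⟩ := rfl
    rw [this, Fin.cons_succ]
  simp only [dif_pos (Nat.succ_pos H), h0, Fin.cons_zero, Fin.cons_succ, Fin.val_zero]
  by_cases hH : 0 < H
  · have h1 : (0:ℕ) + 1 < H + 1 := by omega
    rw [dif_pos h1, dif_pos hH, hc 0 h1]
    have : ∀ t : Fin H, (((t.succ : Fin (H+1)) : ℕ) + 1 < H + 1) ↔ ((t:ℕ)+1 < H) := by
      intro t; rw [Fin.val_succ]; omega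
    have hprod : ∀ t : Fin H,
        (π t.succ (f t).1 (f t).2 *
          if h : ((t.succ : Fin (H+1)) : ℕ) + 1 < H + 1 then
            P t.succ (f t).1 (f t).2 ((Fin.cons x f : Fin (H+1) → S×A) ⟨((t.succ : Fin (H+1)) : ℕ) + 1, h⟩).1 else 1)
        = (π t.succ (f t).1 (f t).2 *
          if h : (t:ℕ) + 1 < H then P t.succ (f t).1 (f t).2 (f ⟨(t:ℕ)+1, h⟩).1 else 1) := by
      intro t
      congr 1
      by_cases ht : (t:ℕ) + 1 < H
      · rw [dif_pos ((this t).mpr ht), dif_pos ht, hc]; rfl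
      · rw [dif_neg (fun h => ht ((this t).mp h)), dif_neg ht]
    rw [Finset.prod_congr rfl (fun t _ => hprod t)]
    ring
  · have hH0 : H = 0 := by omega
    subst hH0
    simp

lemma trajProb_sum {S A : Type*} [Fintype S] [Fintype A] :
    ∀ (H : ℕ) (ρ : S → ℝ) (P : Fin H → S → A → S → ℝ) (π : Fin H → S → A → ℝ),
    (∑ s, ρ s = 1) → (∀ t s a, ∑ s', P t s a s' = 1) → (∀ t s, ∑ a, π t s a = 1) →
    ∑ tr : Fin H → S × A, trajProb ρ P π tr = 1
  | 0, ρ, P, π, hρ, hP, hπ => by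
      simp [trajProb]
  | (H+1), ρ, P, π, hρ, hP, hπ => by
      rw [← Equiv.sum_comp (Fin.consEquiv (fun _ : Fin (H+1) => S × A)) (trajProb ρ P π)]
      rw [Fintype.sum_prod_type]
      have : ∀ x : S × A, ∀ f : Fin H → S × A,
          trajProb ρ P π ((Fin.consEquiv (fun _ : Fin (H+1) => S × A)) (x, f)) =
            ρ x.1 * π 0 x.1 x.2 *
            trajProb (P 0 x.1 x.2) (fun t => P t.succ) (fun t => π t.succ) f := by
        intro x f; exact trajProb_cons ρ P π x f
      calc ∑ x : S × A, ∑ f : Fin H → S × A,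
            trajProb ρ P π ((Fin.consEquiv (fun _ : Fin (H+1) => S × A)) (x, f))
          = ∑ x : S × A, ρ x.1 * π 0 x.1 x.2 := by
            apply Finset.sum_congr rfl; intro x _
            rw [Finset.sum_congr rfl (fun f _ => this x f), ← Finset.mul_sum,
              trajProb_sum H (P 0 x.1 x.2) (fun t => P t.succ) (fun t => π t.succ)
                (hP 0 x.1 x.2) (fun t s a => hP t.succ s a) (fun t s => hπ t.succ s), mul_one]
        _ = 1 := by rw [Fintype.sum_prod_type]; simp [← Finset.mul_sum, hπ, hρ]

-- key inequality
lemma key_ineq (M : ℕ) (hM : 1 ≤ M) (x : ℝ) (hx0 : 0 ≤ x) (hx1 : x ≤ 1) :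
    x * (1 - x) ^ M ≤ 4 / (9 * M) := by
  have hMpos : (0:ℝ) < M := by exact_mod_cast hM
  have h1 : (1 - x) ^ M ≤ Real.exp (-x) ^ M := by
    apply pow_le_pow_left₀ (by linarith) ?_
    linarith [Real.add_one_le_exp (-x)]
  have h2 : x * (1 - x) ^ M ≤ x * Real.exp (-(M * x)) := by
    rw [show (-(M*x) : ℝ) = M * (-x) by ring, Real.exp_nat_mul]
    exact mul_le_mul_of_nonneg_left h1 hx0
  have h3 : (M : ℝ) * x * Real.exp (-(M * x)) ≤ Real.exp (-1) := by
    set u := (M : ℝ) * x with hu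
    have hu0 : 0 ≤ u := by positivity
    have : u ≤ Real.exp (u - 1) := by linarith [Real.add_one_le_exp (u - 1)]
    calc u * Real.exp (-u) ≤ Real.exp (u-1) * Real.exp (-u) := by
          exact mul_le_mul_of_nonneg_right this (Real.exp_nonneg _)
      _ = Real.exp (-1) := by rw [← Real.exp_add]; ring_nf
  have h4 : Real.exp (-1) ≤ 4 / 9 := by
    rw [Real.exp_neg]
    rw [inv_le_comm₀ (Real.exp_pos 1) (by norm_num)]
    calc (4/9 : ℝ)⁻¹ = 9/4 := by norm_num
      _ ≤ Real.exp 1 := by linarith [Real.exp_one_gt_d9.le]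
  calc x * (1-x)^M ≤ x * Real.exp (-(M*x)) := h2
    _ = (M * x * Real.exp (-(M*x))) / M := by field_simp
    _ ≤ Real.exp (-1) / M := by gcongr
    _ ≤ 4 / (9 * M) := by rw [div_le_div_iff₀ hMpos (by positivity)]; nlinarith [h4]

/-- Probability of escaping the expert dataset: if `D₁` consists of `M` i.i.d. expert
trajectories and `E^{≤t}` is the event that a fresh expert rollout visits, at some time
`τ ≤ t`, a state not seen at time `τ` in `D₁`, then for every `t`,
`E_{D₁}[Pr_{π*}[E^{≤t}]] ≤ (4/9)|S|H/M`. -/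
theorem stmt14 {S A : Type*} [Fintype S] [Fintype A] {H M : ℕ} (hM : 1 ≤ M)
    (ρ : S → ℝ) (hρ0 : ∀ s, 0 ≤ ρ s) (hρ1 : ∑ s, ρ s = 1)
    (P : Fin H → S → A → S → ℝ) (hP0 : ∀ t s a s', 0 ≤ P t s a s')
    (hP1 : ∀ t s a, ∑ s', P t s a s' = 1)
    (π : Fin H → S → A → ℝ)
    (hπ0 : ∀ t s a, 0 ≤ π t s a) (hπ1 : ∀ t s, ∑ a, π t s a = 1)
    (t : Fin H) :
    ∑ D1 : Fin M → Fin H → S × A, dataProb ρ P π D1 *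
        (∑ tr : Fin H → S × A,
          if ∃ τ : Fin H, τ ≤ t ∧ ∀ i, (D1 i τ).1 ≠ (tr τ).1 then
            trajProb ρ P π tr else 0)
      ≤ (4 / 9) * (Fintype.card S) * H / M := by
  have htp0 : ∀ tr, 0 ≤ trajProb ρ P π tr :=
    trajProb_nonneg ρ hρ0 P hP0 π hπ0
  have hdp0 : ∀ D1 : Fin M → Fin H → S × A, 0 ≤ dataProb ρ P π D1 := fun D1 =>
    Finset.prod_nonneg fun i _ => htp0 _
  have htotal : ∑ tr : Fin H → S × A, trajProb ρ P π tr = 1 :=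
    trajProb_sum H ρ P π hρ1 hP1 hπ1
  have hp0 : ∀ τ s, 0 ≤ stateProb ρ P π τ s := by
    intro τ s
    apply Finset.sum_nonneg; intro tr _
    split <;> [exact htp0 tr; exact le_rfl]
  have hcond : ∀ (τ : Fin H) (s : S),
      ∑ tr : Fin H → S × A, (trajProb ρ P π tr * if (tr τ).1 ≠ s then 1 else 0)
        = 1 - stateProb ρ P π τ s := by
    intro τ s
    have : ∀ tr : Fin H → S × A,
        trajProb ρ P π tr * (if (tr τ).1 ≠ s then 1 else 0)
          = trajProb ρ P π tr - (if (tr τ).1 = s then trajProb ρ P π tr else 0) := by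
      intro tr; by_cases h : (tr τ).1 = s <;> simp [h]
    rw [Finset.sum_congr rfl fun tr _ => this tr, Finset.sum_sub_distrib, htotal, stateProb]
  have hp1 : ∀ τ s, stateProb ρ P π τ s ≤ 1 := by
    intro τ s
    have h := hcond τ s
    have : 0 ≤ ∑ tr : Fin H → S × A, (trajProb ρ P π tr * if (tr τ).1 ≠ s then 1 else 0) := by
      apply Finset.sum_nonneg; intro tr _
      apply mul_nonneg (htp0 tr); split <;> norm_num
    linarith
  -- factorization of the D1-sum
  have hfact : ∀ (τ : Fin H) (s : S),
      ∑ D1 : Fin M → Fin H → S × A,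
          dataProb ρ P π D1 * (if ∀ i, (D1 i τ).1 ≠ s then 1 else 0)
        = (1 - stateProb ρ P π τ s) ^ M := by
    intro τ s
    have h1 : ∀ D1 : Fin M → Fin H → S × A,
        dataProb ρ P π D1 * (if ∀ i, (D1 i τ).1 ≠ s then 1 else 0)
          = ∏ i, (trajProb ρ P π (D1 i) * if (D1 i τ).1 ≠ s then 1 else 0) := by
      intro D1
      rw [Finset.prod_mul_distrib, Finset.prod_boole, dataProb]
      congr 1
      by_cases h : ∀ i, (D1 i τ).1 ≠ s <;> simp [h]
    rw [Finset.sum_congr rfl fun D1 _ => h1 D1, ← hcond τ s, ← Fin.prod_const M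
      (∑ tr : Fin H → S × A, (trajProb ρ P π tr * if (tr τ).1 ≠ s then 1 else 0))]
    rw [Finset.prod_univ_sum, Fintype.piFinset_univ]
  -- step 1: union bound over τ
  have step1 : ∀ D1 : Fin M → Fin H → S × A,
      (∑ tr : Fin H → S × A,
          if ∃ τ : Fin H, τ ≤ t ∧ ∀ i, (D1 i τ).1 ≠ (tr τ).1 then trajProb ρ P π tr else 0)
        ≤ ∑ τ : Fin H, ∑ tr : Fin H → S × A,
            if ∀ i, (D1 i τ).1 ≠ (tr τ).1 then trajProb ρ P π tr else 0 := by
    intro D1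
    conv_rhs => rw [Finset.sum_comm]
    apply Finset.sum_le_sum
    intro tr _
    by_cases hex : ∃ τ : Fin H, τ ≤ t ∧ ∀ i, (D1 i τ).1 ≠ (tr τ).1
    · obtain ⟨τ0, _, hτ0⟩ := hex
      rw [if_pos ⟨τ0, ‹_›, hτ0⟩]
      have hle := Finset.single_le_sum
        (f := fun τ : Fin H => if ∀ i, (D1 i τ).1 ≠ (tr τ).1 then trajProb ρ P π tr else 0)
        (fun τ _ => by split <;> [exact htp0 tr; exact le_rfl])
        (Finset.mem_univ τ0)
      rwa [if_pos hτ0] at hle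
    · rw [if_neg hex]
      apply Finset.sum_nonneg; intro τ _
      split <;> [exact htp0 tr; exact le_rfl]
  -- combine
  have step2 : ∑ D1 : Fin M → Fin H → S × A, dataProb ρ P π D1 *
        (∑ tr : Fin H → S × A,
          if ∃ τ : Fin H, τ ≤ t ∧ ∀ i, (D1 i τ).1 ≠ (tr τ).1 then trajProb ρ P π tr else 0)
      ≤ ∑ τ : Fin H, ∑ s : S,
          stateProb ρ P π τ s * (1 - stateProb ρ P π τ s) ^ M := by
    calc ∑ D1 : Fin M → Fin H → S × A, dataProb ρ P π D1 *
            (∑ tr : Fin H → S × A,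
              if ∃ τ : Fin H, τ ≤ t ∧ ∀ i, (D1 i τ).1 ≠ (tr τ).1 then trajProb ρ P π tr else 0)
        ≤ ∑ D1 : Fin M → Fin H → S × A, dataProb ρ P π D1 *
            (∑ τ : Fin H, ∑ tr : Fin H → S × A,
              if ∀ i, (D1 i τ).1 ≠ (tr τ).1 then trajProb ρ P π tr else 0) := by
          apply Finset.sum_le_sum; intro D1 _
          exact mul_le_mul_of_nonneg_left (step1 D1) (hdp0 D1)
      _ = ∑ τ : Fin H, ∑ s : S,
            stateProb ρ P π τ s * (1 - stateProb ρ P π τ s) ^ M := by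
          have hrw : ∀ (D1 : Fin M → Fin H → S × A) (τ : Fin H),
              (∑ tr : Fin H → S × A,
                if ∀ i, (D1 i τ).1 ≠ (tr τ).1 then trajProb ρ P π tr else 0)
              = ∑ s : S, (if ∀ i, (D1 i τ).1 ≠ s then 1 else 0) * stateProb ρ P π τ s := by
            intro D1 τ
            unfold stateProb
            simp_rw [Finset.mul_sum]
            rw [Finset.sum_comm]
            apply Finset.sum_congr rfl; intro tr _
            have : ∀ s : S, (if ∀ i, (D1 i τ).1 ≠ s then 1 else 0) *
                (if (tr τ).1 = s then trajProb ρ P π tr else 0)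
                = if (tr τ).1 = s then
                    (if ∀ i, (D1 i τ).1 ≠ (tr τ).1 then trajProb ρ P π tr else 0) else 0 := by
              intro s
              by_cases h : (tr τ).1 = s
              · subst h; by_cases h2 : ∀ i, (D1 i τ).1 ≠ (tr τ).1 <;> simp [h2]
              · simp [h]
            rw [Finset.sum_congr rfl fun s _ => this s, Finset.sum_ite_eq]
            simp
          simp_rw [hrw, Finset.mul_sum]
          rw [Finset.sum_comm]
          apply Finset.sum_congr rfl; intro τ _
          rw [Finset.sum_comm]
          apply Finset.sum_congr rfl; intro s _
          rw [← hfact τ s, Finset.mul_sum]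
          apply Finset.sum_congr rfl; intro D1 _
          ring
  refine le_trans step2 ?_
  have hMpos : (0:ℝ) < M := by exact_mod_cast hM
  calc ∑ τ : Fin H, ∑ s : S, stateProb ρ P π τ s * (1 - stateProb ρ P π τ s) ^ M
      ≤ ∑ _τ : Fin H, ∑ _s : S, (4 / (9 * (M:ℝ)) : ℝ) := by
        apply Finset.sum_le_sum; intro τ _
        apply Finset.sum_le_sum; intro s _
        exact key_ineq M hM _ (hp0 τ s) (hp1 τ s)
    _ = (4 / 9) * (Fintype.card S) * H / M := by
        rw [Finset.sum_const, Finset.sum_const]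
        simp only [Finset.card_univ, Fintype.card_fin, nsmul_eq_mul]
        field_simp
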